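/- arXiv:1305.6031 — 2 statements merged into one kernel-verified Lean document; each statement's English description precedes it below -/
import Mathlib

section
/- For fixed k, the generating function for cφ_k(n) is the constant term in z of ∏_{m≥0} (1+z q^{m+1})^k (1+z^{-1} q^m)^k; i.e., the coefficient of z^0 q^n in this product equals the number of k-colored generalized Frobenius partitions of n. -/
/-- The truncation at level `M` (factors `m = 0, …, M`) of Andrews' infinite product
`∏_{m ≥ 0} (1 + z q^{m+1})^k (1 + z^{-1} q^m)^k`, viewed as a Laurent polynomial in `z`
over `ℤ⟦q⟧`.  Here `T 1` plays the role of `z` and `PowerSeries.X` the role of `q`. -/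
noncomputable def frobProd (k M : ℕ) : LaurentPolynomial (PowerSeries ℤ) :=
  ∏ m ∈ Finset.range (M + 1),
    ((1 + LaurentPolynomial.C (PowerSeries.X ^ (m + 1)) * LaurentPolynomial.T 1) ^ k *
      (1 + LaurentPolynomial.C (PowerSeries.X ^ m) * LaurentPolynomial.T (-1)) ^ k)

/-- `cφ_k(n)`: the coefficient of `z^0 q^n` in Andrews' infinite product.  Since every
factor with index `m > n` is `≡ 1 (mod q^{n+1})`, this coefficient is already attained by
the truncation `frobProd k n`. -/
noncomputable def cphi (k n : ℕ) : ℤ :=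
  PowerSeries.coeff n (AddMonoidAlgebra.coeff (frobProd k n) 0)

/-- A `k`-colored generalized Frobenius partition of `n`: a two-rowed array of colored
nonnegative integers (elements of `ℕ × Fin k`), both rows of the same length `len`,
each row strictly decreasing with respect to the fixed linear order on colored integers
given by the encoding `(a, c) ↦ k * a + c` (so the entries of a row are distinct as
colored integers), and such that the sum of all entries plus the number of columns
equals `n`. -/
structure GenFrobeniusPartition (k n : ℕ) where
  len : ℕ
  top : Fin len → ℕ × Fin k
  bot : Fin len → ℕ × Fin k
  top_anti : StrictAnti fun i => k * (top i).1 + ((top i).2 : ℕ)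
  bot_anti : StrictAnti fun i => k * (bot i).1 + ((bot i).2 : ℕ)
  sum_eq : (∑ i, (top i).1) + (∑ i, (bot i).1) + len = n

/-!
Splitting the `k`-th powers over the colors, the truncated product is
`∏_{x} (1 + z q^{a+1}) (1 + z⁻¹ q^a)` over colored integers `x = (a, c)` with `a ≤ n`.
Expanding it, each pair `(A, B)` of sets of colored integers contributes
`z^{|A| - |B|} q^{ΣA + |A| + ΣB}`, so the coefficient of `z^0 q^n` counts the pairs with
`|A| = |B|` and `ΣA + ΣB + |A| = n`. Listing `A` and `B` in decreasing order gives the two rows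
of a generalized Frobenius partition, and a strictly decreasing row is determined by its set of
entries.
-/

open Finset Function LaurentPolynomial

section SortedEnumeration

variable {α β : Type*} [LinearOrder β] {e : α → β} {m : ℕ}

theorem Function.Injective.eq_of_strictAnti_comp_of_range_eq (he : Injective e)
    {f g : Fin m → α} (hf : StrictAnti (e ∘ f)) (hg : StrictAnti (e ∘ g))
    (h : Set.range f = Set.range g) : f = g :=
  he.comp_left <| (hf.range_inj hg).1 <| by rw [Set.range_comp, Set.range_comp, h]

theorem Function.Injective.exists_strictAnti_comp_range_eq (he : Injective e) (s : Finset α)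
    (hs : #s = m) : ∃ f : Fin m → α, StrictAnti (e ∘ f) ∧ Set.range f = s := by
  let := LinearOrder.lift' e he
  exact ⟨s.orderEmbOfFin hs ∘ Fin.rev,
    (s.orderEmbOfFin hs).strictMono.comp_strictAnti Fin.rev_strictAnti,
    by rw [Fin.rev_surjective.range_comp, range_orderEmbOfFin]⟩

end SortedEnumeration

theorem LaurentPolynomial.prod_one_add_C_mul_T {R ι : Type*} [CommSemiring R] (s : Finset ι)
    (a : ι → R) (t : ℤ) :
    ∏ i ∈ s, (1 + C (a i) * T t : R[T;T⁻¹]) =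
      ∑ A ∈ s.powerset, C (∏ i ∈ A, a i) * T (#A * t) := by
  rw [prod_one_add]
  refine sum_congr rfl fun A _ => ?_
  rw [prod_mul_distrib, ← map_prod, prod_const, T_pow]

theorem LaurentPolynomial.coeff_coeff_sum_single_X_pow {R ι : Type*} [Semiring R]
    (s : Finset ι) (a : ι → ℤ) (b : ι → ℕ) (j : ℤ) (n : ℕ) :
    PowerSeries.coeff n (AddMonoidAlgebra.coeff
        (∑ i ∈ s, .single (a i) (PowerSeries.X ^ b i) : LaurentPolynomial (PowerSeries R)) j) =
      #{i ∈ s | a i = j ∧ b i = n} := by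
  rw [AddMonoidAlgebra.coeff_sum, sum_apply']
  simp only [AddMonoidAlgebra.coeff_single, Finsupp.single_apply, map_sum,
    apply_ite (PowerSeries.coeff n), PowerSeries.coeff_X_pow, map_zero, ← ite_and, sum_boole,
    eq_comm (a := n)]

def coloredRange (k M : ℕ) : Finset (ℕ × Fin k) := range (M + 1) ×ˢ univ

theorem frobProd_eq_sum_single (k M : ℕ) :
    frobProd k M = ∑ p ∈ (coloredRange k M).powerset ×ˢ (coloredRange k M).powerset,
      .single (#p.1 - #p.2 : ℤ) (PowerSeries.X ^ (∑ x ∈ p.1, (x.1 + 1) + ∑ y ∈ p.2, y.1)) := by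
  have split : frobProd k M =
      (∏ x ∈ coloredRange k M, (1 + C (PowerSeries.X ^ (x.1 + 1)) * T 1)) *
        ∏ x ∈ coloredRange k M, (1 + C (PowerSeries.X ^ x.1) * T (-1)) := by
    simp [frobProd, coloredRange, prod_product, prod_mul_distrib]
  rw [split, prod_one_add_C_mul_T, prod_one_add_C_mul_T, sum_mul_sum, ← sum_product']
  refine sum_congr rfl fun p _ => ?_
  rw [single_eq_C_mul_T, mul_mul_mul_comm, ← map_mul, ← T_add, prod_pow_eq_pow_sum,
    prod_pow_eq_pow_sum, ← pow_add]
  congr 2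
  ring

def frobeniusPairs (k n : ℕ) : Finset (Finset (ℕ × Fin k) × Finset (ℕ × Fin k)) :=
  {p ∈ (coloredRange k n).powerset ×ˢ (coloredRange k n).powerset |
    #p.1 = #p.2 ∧ ∑ x ∈ p.1, x.1 + ∑ y ∈ p.2, y.1 + #p.1 = n}

theorem cphi_eq_card_frobeniusPairs (k n : ℕ) : cphi k n = #(frobeniusPairs k n) := by
  rw [cphi, frobProd_eq_sum_single, coeff_coeff_sum_single_X_pow, frobeniusPairs]
  congr 2
  refine filter_congr fun p _ => ?_
  rw [sum_add_distrib, sum_const, smul_eq_mul, mul_one, sub_eq_zero, Nat.cast_inj]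
  omega

/-- `top_anti` and `bot_anti` say that `colorCode k ∘ top` and `colorCode k ∘ bot` are strictly
antitone. -/
def colorCode (k : ℕ) (x : ℕ × Fin k) : ℕ := k * x.1 + x.2

theorem colorCode_injective (k : ℕ) : Injective (colorCode k) := by
  rintro ⟨a, c⟩ ⟨b, d⟩ h
  have hk : 0 < k := c.pos
  obtain rfl : a = b := by
    simpa [colorCode, Nat.mul_add_div hk, Nat.div_eq_of_lt c.2, Nat.div_eq_of_lt d.2]
      using congrArg (· / k) h
  simp_all [colorCode, Fin.ext_iff]

namespace GenFrobeniusPartition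

variable {k n : ℕ}

theorem injective_top (P : GenFrobeniusPartition k n) : Injective P.top :=
  P.top_anti.injective.of_comp (f := colorCode k)

theorem injective_bot (P : GenFrobeniusPartition k n) : Injective P.bot :=
  P.bot_anti.injective.of_comp (f := colorCode k)

def rows (P : GenFrobeniusPartition k n) : Finset (ℕ × Fin k) × Finset (ℕ × Fin k) :=
  (univ.image P.top, univ.image P.bot)

theorem fst_top_le (P : GenFrobeniusPartition k n) (i : Fin P.len) : (P.top i).1 ≤ n := by
  have := single_le_sum (fun j _ => Nat.zero_le (P.top j).1) (mem_univ i)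
  have := P.sum_eq
  omega

theorem fst_bot_le (P : GenFrobeniusPartition k n) (i : Fin P.len) : (P.bot i).1 ≤ n := by
  have := single_le_sum (fun j _ => Nat.zero_le (P.bot j).1) (mem_univ i)
  have := P.sum_eq
  omega

theorem rows_mem_frobeniusPairs (P : GenFrobeniusPartition k n) :
    P.rows ∈ frobeniusPairs k n := by
  have card_top : #(univ.image P.top) = P.len := by
    simp [card_image_of_injective _ P.injective_top]
  have card_bot : #(univ.image P.bot) = P.len := by
    simp [card_image_of_injective _ P.injective_bot]
  have sum_top : ∑ x ∈ univ.image P.top, x.1 = ∑ i, (P.top i).1 :=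
    sum_image fun _ _ _ _ h => P.injective_top h
  have sum_bot : ∑ x ∈ univ.image P.bot, x.1 = ∑ i, (P.bot i).1 :=
    sum_image fun _ _ _ _ h => P.injective_bot h
  simp only [rows, frobeniusPairs, mem_filter, mem_product, mem_powerset]
  refine ⟨⟨?_, ?_⟩, by rw [card_top, card_bot], by rw [card_top, sum_top, sum_bot, P.sum_eq]⟩
  all_goals
    intro x hx
    obtain ⟨i, -, rfl⟩ := mem_image.1 hx
    simp [coloredRange, fst_top_le, fst_bot_le]

theorem rows_injective : Injective (rows (k := k) (n := n)) := by
  rintro ⟨l, t, b, ht, hb, hs⟩ ⟨l', t', b', ht', hb', hs'⟩ h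
  simp only [rows, Prod.mk.injEq] at h
  obtain rfl : l = l' := by
    simpa [card_image_of_injective _ (injective_top ⟨l, t, b, ht, hb, hs⟩),
      card_image_of_injective _ (injective_top ⟨l', t', b', ht', hb', hs'⟩)]
      using congrArg card h.1
  simp only [← coe_inj, Fintype.coe_image_univ] at h
  obtain rfl := (colorCode_injective k).eq_of_strictAnti_comp_of_range_eq ht ht' h.1
  obtain rfl := (colorCode_injective k).eq_of_strictAnti_comp_of_range_eq hb hb' h.2
  rfl

theorem exists_rows_eq {p : Finset (ℕ × Fin k) × Finset (ℕ × Fin k)}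
    (hp : p ∈ frobeniusPairs k n) : ∃ P : GenFrobeniusPartition k n, P.rows = p := by
  obtain ⟨A, B⟩ := p
  obtain ⟨-, hcard, hsum⟩ := mem_filter.1 hp
  generalize hm : #A = m at hcard hsum
  obtain ⟨t, ht, htA⟩ := (colorCode_injective k).exists_strictAnti_comp_range_eq A hm
  obtain ⟨b, hb, hbB⟩ := (colorCode_injective k).exists_strictAnti_comp_range_eq B hcard.symm
  rw [← Fintype.coe_image_univ, coe_inj] at htA hbB
  subst htA hbB
  refine ⟨⟨m, t, b, ht, hb, ?_⟩, rfl⟩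
  rwa [sum_image fun _ _ _ _ h => ht.injective.of_comp h,
    sum_image fun _ _ _ _ h => hb.injective.of_comp h] at hsum

theorem range_rows : Set.range (rows (k := k) (n := n)) = frobeniusPairs k n := by
  ext p
  exact ⟨by rintro ⟨P, rfl⟩; exact P.rows_mem_frobeniusPairs, exists_rows_eq⟩

end GenFrobeniusPartition

theorem cphi_eq_card_genFrobeniusPartition_general (k n : ℕ) :
    cphi k n = Nat.card (GenFrobeniusPartition k n) := by
  rw [cphi_eq_card_frobeniusPairs,
    ← Nat.card_range_of_injective GenFrobeniusPartition.rows_injective,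
    GenFrobeniusPartition.range_rows, Nat.card_coe_set_eq, Set.ncard_coe_finset]

/-- Andrews' Theorem: the coefficient of `z^0 q^n` in
`∏_{m ≥ 0} (1 + z q^{m+1})^k (1 + z^{-1} q^m)^k` is the number of `k`-colored
generalized Frobenius partitions of `n`. -/
theorem cphi_eq_card_genFrobeniusPartition (k n : ℕ) (hk : 0 < k) :
    cphi k n = Nat.card (GenFrobeniusPartition k n) :=
  cphi_eq_card_genFrobeniusPartition_general k n
end

section
/- For all N ≥ 1 and all n ≥ 0, cφ_{3N}(3n+2) ≡ 0 (mod 3). -/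
/-! Modulo a prime `p` we have `(1 + x)^p ≡ 1 + x^p`, so for `k = pN` every factor
`(1 + z^{±1} q^m)^k` of Andrews' product is congruent to a power of `1 + z^{±p} q^{pm}`.
Hence, modulo `p`, only powers `q^n` with `p ∣ n` survive in any `z`-coefficient, which gives
`p ∣ cφ_{pN}(n)` whenever `p ∤ n`; the theorem is the case `p = 3`. -/

open LaurentPolynomial
open scoped PowerSeries

namespace AddMonoidAlgebra

variable {R G : Type*} [Ring R] [AddMonoid G]

def coeffSubring (S : Subring R) : Subring (AddMonoidAlgebra R G) where
  carrier := {x | ∀ g, x.coeff g ∈ S}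
  zero_mem' _ := S.zero_mem
  one_mem' g := by
    classical
    rw [one_def, coeff_single, Finsupp.single_apply]
    split_ifs
    exacts [S.one_mem, S.zero_mem]
  add_mem' hx hy g := S.add_mem (hx g) (hy g)
  neg_mem' hx g := S.neg_mem (hx g)
  mul_mem' {x y} hx hy g := by
    classical
    rw [coeff_mul]
    refine S.sum_mem fun g₁ _ => S.sum_mem fun g₂ _ => ?_
    dsimp only
    split_ifs
    exacts [S.mul_mem (hx g₁) (hy g₂), S.zero_mem]

theorem single_mem_coeffSubring {S : Subring R} {s : R} (hs : s ∈ S) (g : G) :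
    single g s ∈ coeffSubring S := by
  classical
  intro g'
  rw [coeff_single, Finsupp.single_apply]
  split_ifs
  exacts [hs, S.zero_mem]

end AddMonoidAlgebra

namespace PowerSeries

/-- The integer power series that are congruent modulo `p` to a power series in `X ^ p`. -/
def sparseModSubring (p : ℕ) : Subring ℤ⟦X⟧ where
  carrier := {f | ∀ n, ¬ p ∣ n → (p : ℤ) ∣ coeff n f}
  zero_mem' _ _ := by simp
  one_mem' n hn := by
    have hn0 : n ≠ 0 := by rintro rfl; exact hn (dvd_zero p)
    simp [coeff_one, hn0]
  add_mem' hf hg n hn := by simpa using dvd_add (hf n hn) (hg n hn)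
  neg_mem' hf n hn := by simpa using hf n hn
  mul_mem' {f g} hf hg n hn := by
    rw [coeff_mul]
    refine Finset.dvd_sum fun ij hij => ?_
    rw [Finset.HasAntidiagonal.mem_antidiagonal] at hij
    by_cases hi : p ∣ ij.1
    · have hj : ¬ p ∣ ij.2 := fun hj => hn (hij ▸ dvd_add hi hj)
      exact (hg _ hj).mul_left _
    · exact (hf _ hi).mul_right _

variable {p : ℕ}

theorem X_pow_mem_sparseModSubring {m : ℕ} (hm : p ∣ m) : X ^ m ∈ sparseModSubring p := by
  intro n hn
  have hnm : n ≠ m := by rintro rfl; exact hn hm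
  simp [coeff_X_pow, hnm]

theorem nsmul_mem_sparseModSubring (f : ℤ⟦X⟧) : p • f ∈ sparseModSubring p := by
  intro n _
  rw [map_nsmul, nsmul_eq_mul]
  exact dvd_mul_right _ _

end PowerSeries

open AddMonoidAlgebra
open PowerSeries (X sparseModSubring X_pow_mem_sparseModSubring nsmul_mem_sparseModSubring)

theorem one_add_C_mul_T_pow_mem_coeffSubring {p : ℕ} (hp : p.Prime) (m : ℕ) (j : ℤ) :
    (1 + C ((X : ℤ⟦X⟧) ^ m) * T j) ^ p ∈ coeffSubring (sparseModSubring p) := by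
  obtain ⟨r, hr⟩ := exists_add_pow_prime_eq hp 1 (C ((X : ℤ⟦X⟧) ^ m) * T j)
  have hpow : (C ((X : ℤ⟦X⟧) ^ m) * T j) ^ p = single (p * j) (X ^ (p * m)) := by
    rw [single_eq_C_mul_T, mul_pow, ← map_pow, ← pow_mul, T_pow, mul_comm m]
  rw [hr, hpow, one_pow, mul_one, mul_assoc, ← nsmul_eq_mul p (_ : LaurentPolynomial ℤ⟦X⟧)]
  refine Subring.add_mem _ (Subring.add_mem _ (Subring.one_mem _) ?_) fun g => ?_
  · exact single_mem_coeffSubring (X_pow_mem_sparseModSubring (dvd_mul_right p m)) _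
  · rw [coeff_smul_apply]
    exact nsmul_mem_sparseModSubring _

theorem frobProd_mem_coeffSubring {p : ℕ} (hp : p.Prime) (N M : ℕ) :
    frobProd (p * N) M ∈ coeffSubring (sparseModSubring p) := by
  refine Subring.prod_mem _ fun m _ => Subring.mul_mem _ ?_ ?_ <;>
    rw [pow_mul] <;>
    exact Subring.pow_mem _ (one_add_C_mul_T_pow_mem_coeffSubring hp _ _) N

theorem prime_dvd_cphi {p : ℕ} (hp : p.Prime) (N : ℕ) {n : ℕ} (hn : ¬ p ∣ n) :
    (p : ℤ) ∣ cphi (p * N) n :=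
  frobProd_mem_coeffSubring hp N n 0 n hn

theorem cphi_three_general (N : ℕ) (n : ℕ) : (3 : ℤ) ∣ cphi (3 * N) (3 * n + 2) :=
  prime_dvd_cphi Nat.prime_three N (by omega)

/-- For all `N ≥ 1` and `n ≥ 0`, `cφ_{3N}(3n+2) ≡ 0 (mod 3)`. -/
theorem cphi_three (N : ℕ) (hN : 1 ≤ N) (n : ℕ) : (3 : ℤ) ∣ cphi (3 * N) (3 * n + 2) :=
  cphi_three_general N n
end
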